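/- Let G : R^n → R^p be C¹ with T_G ∈ R^{n×p} satisfying T_G ∇G(η) + (∇G(η))^T T_G^T ≥ ρ_G I_n for all η with ρ_G > 0. Define W : R^{1+n} → R^{1+2p} by W(θ₁, η) = (θ₁, G(η), θ₁·G(η)), and T = [[1, 0_{1×p}, 0_{1×p}], [0_{n×1}, T_G, 0_{n×p}]]. Then T·∇W(θ₁,η) + (∇W(θ₁,η))^T T^T ≥ ρ I_{1+n} for ρ = min(2, ρ_G) > 0, for all (θ₁, η). -/

import Mathlib

open Matrix

/-- Jacobian matrix of a map `G : (Fin n → ℝ) → (Fin p → ℝ)` at a point. -/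
noncomputable def jacobian {n p : ℕ} (G : (Fin n → ℝ) → (Fin p → ℝ)) (η : Fin n → ℝ) :
    Matrix (Fin p) (Fin n) ℝ :=
  Matrix.of fun i j => fderiv ℝ G η (Pi.single j 1) i

/-- Jacobian of the map `W(θ₁,η) = (θ₁, G(η), θ₁ G(η))`, written in block form:
rows indexed by `Unit ⊕ (Fin p ⊕ Fin p)`, columns by `Unit ⊕ Fin n`. -/
noncomputable def jacW {n p : ℕ} (G : (Fin n → ℝ) → (Fin p → ℝ)) (θ₁ : ℝ) (η : Fin n → ℝ) :
    Matrix (Unit ⊕ (Fin p ⊕ Fin p)) (Unit ⊕ Fin n) ℝ :=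
  Matrix.fromBlocks (1 : Matrix Unit Unit ℝ) 0
    (Matrix.of fun i _ => Sum.elim (fun _ : Fin p => (0 : ℝ)) (fun j => G η j) i)
    (Matrix.of fun i j => Sum.elim (fun i' => jacobian G η i' j)
      (fun i' => θ₁ * jacobian G η i' j) i)

/-- The matrix `T = [[1, 0, 0], [0, T_G, 0]]` of Lemma 4. -/
def TW {n p : ℕ} (TG : Matrix (Fin n) (Fin p) ℝ) :
    Matrix (Unit ⊕ Fin n) (Unit ⊕ (Fin p ⊕ Fin p)) ℝ :=
  Matrix.fromBlocks (1 : Matrix Unit Unit ℝ) 0 0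
    (Matrix.of fun i j => Sum.elim (fun j' => TG i j') (fun _ => (0 : ℝ)) j)

/-! The rows of `∇W` belonging to `θ₁ G(η)` meet the zero block of `T`, and `∂G/∂θ₁ = 0`, so
`T ∇W = diag(1, T_G ∇G)`. Its symmetric part is block diagonal, `diag(2, T_G ∇G + ∇Gᵀ T_Gᵀ)`,
and each block dominates `min 2 ρ_G` times the identity. -/

namespace Matrix

variable {m n R : Type*} [Fintype m] [Fintype n] [CommRing R] [PartialOrder R] [StarRing R]
  [IsOrderedRing R]

theorem PosSemidef.fromBlocks_zero {A : Matrix m m R} {D : Matrix n n R}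
    (hA : A.PosSemidef) (hD : D.PosSemidef) : (fromBlocks A 0 0 D).PosSemidef := by
  rw [posSemidef_iff_dotProduct_mulVec] at hA hD ⊢
  refine ⟨hA.1.fromBlocks (by simp) hD.1, fun x => ?_⟩
  obtain ⟨u, v, rfl⟩ : ∃ u v, x = Sum.elim u v := ⟨_, _, (Sum.elim_comp_inl_inr x).symm⟩
  simpa [fromBlocks_mulVec, Function.star_sumElim, dotProduct_block] using
    add_nonneg (hA.2 u) (hD.2 v)

omit [Fintype n] in
theorem PosSemidef.sub_smul_one_of_le [StarOrderedRing R] [DecidableEq n] {M : Matrix n n R}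
    {a b : R} (hM : (M - a • 1).PosSemidef) (hba : b ≤ a) : (M - b • 1).PosSemidef := by
  have h : M - b • 1 = (M - a • 1) + (a - b) • (1 : Matrix n n R) := by
    rw [sub_smul]; abel
  rw [h]
  exact hM.add (PosSemidef.one.smul (sub_nonneg.2 hba))

end Matrix

theorem TW_mul_jacW {n p : ℕ} (TG : Matrix (Fin n) (Fin p) ℝ) (G : (Fin n → ℝ) → (Fin p → ℝ))
    (θ₁ : ℝ) (η : Fin n → ℝ) :
    TW TG * jacW G θ₁ η = fromBlocks 1 0 0 (TG * jacobian G η) := by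
  ext (i | i) (j | j) <;> simp [TW, jacW, Matrix.mul_apply, Fintype.sum_sum_type]

theorem statement4_general {n p : ℕ} (G : (Fin n → ℝ) → (Fin p → ℝ))
    (TG : Matrix (Fin n) (Fin p) ℝ) (ρG : ℝ)
    (hLMI : ∀ η : Fin n → ℝ,
      (TG * jacobian G η + (jacobian G η)ᵀ * TGᵀ -
        ρG • (1 : Matrix (Fin n) (Fin n) ℝ)).PosSemidef) :
    ∀ (θ₁ : ℝ) (η : Fin n → ℝ),
      (TW TG * jacW G θ₁ η + (jacW G θ₁ η)ᵀ * (TW TG)ᵀ -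
        (min 2 ρG) • (1 : Matrix (Unit ⊕ Fin n) (Unit ⊕ Fin n) ℝ)).PosSemidef := by
  intro θ₁ η
  have hblocks : TW TG * jacW G θ₁ η + (jacW G θ₁ η)ᵀ * (TW TG)ᵀ - min 2 ρG • 1 =
      fromBlocks (1 + 1 - min 2 ρG • 1) 0 0
        (TG * jacobian G η + (jacobian G η)ᵀ * TGᵀ - min 2 ρG • 1) := by
    rw [← transpose_mul, TW_mul_jacW, fromBlocks_transpose, transpose_mul, fromBlocks_add,
      ← fromBlocks_one, fromBlocks_smul]
    simp [sub_eq_add_neg, fromBlocks_neg, fromBlocks_add]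
  have hunit : (1 + 1 - (2 : ℝ) • (1 : Matrix Unit Unit ℝ)).PosSemidef := by
    rw [two_smul, sub_self]
    exact .zero
  rw [hblocks]
  exact (hunit.sub_smul_one_of_le (min_le_left _ _)).fromBlocks_zero
    ((hLMI η).sub_smul_one_of_le (min_le_right _ _))

theorem statement4 {n p : ℕ} (G : (Fin n → ℝ) → (Fin p → ℝ)) (hG : ContDiff ℝ 1 G)
    (TG : Matrix (Fin n) (Fin p) ℝ) (ρG : ℝ) (hρG : 0 < ρG)
    (hLMI : ∀ η : Fin n → ℝ,
      (TG * jacobian G η + (jacobian G η)ᵀ * TGᵀ -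
        ρG • (1 : Matrix (Fin n) (Fin n) ℝ)).PosSemidef) :
    ∀ (θ₁ : ℝ) (η : Fin n → ℝ),
      (TW TG * jacW G θ₁ η + (jacW G θ₁ η)ᵀ * (TW TG)ᵀ -
        (min 2 ρG) • (1 : Matrix (Unit ⊕ Fin n) (Unit ⊕ Fin n) ℝ)).PosSemidef :=
  statement4_general G TG ρG hLMI
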